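/- arXiv:1312.0876 — 7 statements merged into one kernel-verified Lean document; each statement's English description precedes it below -/
import Mathlib

section
/- Let k > 0, α < 0, t₀ ≥ 0 and y₀ > 0, and set t̄ = t₀ + (1/k)·ln((y₀² − 2α/k)/(−2α/k)). Then the radicand R(t) = y₀² e^{−k(t−t₀)} + (2α/k)(1 − e^{−k(t−t₀)}) satisfies R(t) > 0 for t₀ ≤ t < t̄ and R(t̄) = 0; hence the function y⁰(t) = R(t)^{1/2} satisfies y⁰(t) > 0 on [t₀, t̄) and y⁰(t̄) = 0, and moreover (y⁰)′(t) → −∞ as t → t̄ from the left. -/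
/-!
Writing `B = 2α/k` and `A = y₀² - B > 0`, the radicand is `R t = A e^{-k(t-t₀)} + B`, a strictly
decreasing function whose only zero is `t̄`. It solves `R' = -k (R - B)`, so `R'(t) → k B = 2α < 0`
as `t → t̄`, while `√R(t) → 0⁺`; hence `(√R)' = R' / (2√R) → -∞`.
-/

open Real Filter Topology Set

theorem tendsto_deriv_sqrt_atBot {f f' : ℝ → ℝ} {l : Filter ℝ} {c : ℝ} (hc : c < 0)
    (hderiv : ∀ᶠ t in l, HasDerivAt f (f' t) t) (hf : Tendsto f l (𝓝[>] 0))
    (hf' : Tendsto f' l (𝓝 c)) : Tendsto (deriv fun t => √(f t)) l atBot := by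
  have hsqrt : Tendsto (fun t => 2 * √(f t)) l (𝓝[>] 0) := by
    refine tendsto_nhdsWithin_iff.mpr ⟨?_, ?_⟩
    · simpa using ((continuous_sqrt.tendsto 0).comp (tendsto_nhdsWithin_iff.mp hf).1).const_mul 2
    · filter_upwards [(tendsto_nhdsWithin_iff.mp hf).2] with t ht
      exact mul_pos two_pos (sqrt_pos.mpr ht)
  refine (hf'.neg_mul_atTop hc hsqrt.inv_tendsto_nhdsGT_zero).congr' ?_
  filter_upwards [hderiv, (tendsto_nhdsWithin_iff.mp hf).2] with t hd hpos
  rw [(hd.sqrt (ne_of_gt hpos)).deriv, div_eq_mul_inv]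
  rfl

noncomputable def shiftedExpDecay (A B k t₀ t : ℝ) : ℝ := A * exp (-(k * (t - t₀))) + B

section shiftedExpDecay

variable {A B k t₀ : ℝ}

@[fun_prop]
theorem continuous_shiftedExpDecay : Continuous (shiftedExpDecay A B k t₀) := by
  unfold shiftedExpDecay; fun_prop

theorem hasDerivAt_shiftedExpDecay (t : ℝ) :
    HasDerivAt (shiftedExpDecay A B k t₀) (-k * (shiftedExpDecay A B k t₀ t - B)) t := by
  have hlin : HasDerivAt (fun s => -(k * (s - t₀))) (-k) t := by
    simpa using (((hasDerivAt_id t).sub_const t₀).const_mul k).fun_neg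
  refine ((hlin.exp.const_mul A).add_const B).congr_deriv ?_
  simp only [shiftedExpDecay]; ring

theorem strictAnti_shiftedExpDecay (hA : 0 < A) (hk : 0 < k) :
    StrictAnti (shiftedExpDecay A B k t₀) := by
  intro s t hst
  have : exp (-(k * (t - t₀))) < exp (-(k * (s - t₀))) := exp_lt_exp.mpr (by nlinarith)
  simp only [shiftedExpDecay]
  nlinarith

theorem shiftedExpDecay_log_eq_zero (hA : 0 < A) (hB : B < 0) (hk : k ≠ 0) :
    shiftedExpDecay A B k t₀ (t₀ + 1 / k * log (A / -B)) = 0 := by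
  have hexp : -(k * (t₀ + 1 / k * log (A / -B) - t₀)) = log (-B / A) := by
    rw [← inv_div A, log_inv]; field_simp; ring
  rw [shiftedExpDecay, hexp, exp_log (div_pos (neg_pos.mpr hB) hA)]
  field_simp; ring

end shiftedExpDecay

theorem stmt_4_general (k α t₀ y₀ : ℝ) (hk : 0 < k) (hα : α < 0) :
    let tbar : ℝ := t₀ + 1 / k * Real.log ((y₀ ^ 2 - 2 * α / k) / (-(2 * α) / k))
    let R : ℝ → ℝ := fun t => y₀ ^ 2 * Real.exp (-(k * (t - t₀))) +
      2 * α / k * (1 - Real.exp (-(k * (t - t₀))))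
    let y : ℝ → ℝ := fun t => Real.sqrt (R t)
    (∀ t, t₀ ≤ t → t < tbar → 0 < R t) ∧ R tbar = 0 ∧
    (∀ t, t₀ ≤ t → t < tbar → 0 < y t) ∧ y tbar = 0 ∧
    Filter.Tendsto (deriv y) (nhdsWithin tbar (Set.Iio tbar)) Filter.atBot := by
  intro tbar R y
  set B := 2 * α / k
  have hB : B < 0 := div_neg_of_neg_of_pos (by linarith) hk
  have hA : 0 < y₀ ^ 2 - B := by nlinarith
  have hR : R = shiftedExpDecay (y₀ ^ 2 - B) B k t₀ := by
    funext t; simp only [R, shiftedExpDecay]; ring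
  have hzero : R tbar = 0 := by
    rw [hR, show tbar = t₀ + 1 / k * log ((y₀ ^ 2 - B) / -B) by simp only [tbar, B, neg_div]]
    exact shiftedExpDecay_log_eq_zero hA hB hk.ne'
  have hpos : ∀ t < tbar, 0 < R t := fun t ht =>
    hzero ▸ hR ▸ strictAnti_shiftedExpDecay hA hk ht
  refine ⟨fun t _ ht => hpos t ht, hzero, fun t _ ht => sqrt_pos.mpr (hpos t ht),
    by simp only [y, hzero, sqrt_zero], ?_⟩
  have hRcont : Continuous R := hR ▸ continuous_shiftedExpDecay
  refine tendsto_deriv_sqrt_atBot (f' := fun t => -k * (R t - B)) (mul_neg_of_pos_of_neg hk hB)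
    (.of_forall fun t => by rw [hR]; exact hasDerivAt_shiftedExpDecay t) ?_ ?_
  · refine tendsto_nhdsWithin_iff.mpr
      ⟨hzero ▸ (hRcont.tendsto tbar).mono_left nhdsWithin_le_nhds, ?_⟩
    filter_upwards [self_mem_nhdsWithin] with t ht using hpos t ht
  · have hlim : Tendsto (fun t => -k * (R t - B)) (𝓝[<] tbar) (𝓝 (-k * (R tbar - B))) :=
      ((by fun_prop : Continuous fun t => -k * (R t - B)).tendsto tbar).mono_left nhdsWithin_le_nhds
    convert hlim using 2
    rw [hzero]; ring

theorem stmt_4 (k α t₀ y₀ : ℝ) (hk : 0 < k) (hα : α < 0) (ht₀ : 0 ≤ t₀) (hy₀ : 0 < y₀) :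
    let tbar : ℝ := t₀ + 1 / k * Real.log ((y₀ ^ 2 - 2 * α / k) / (-(2 * α) / k))
    let R : ℝ → ℝ := fun t => y₀ ^ 2 * Real.exp (-(k * (t - t₀))) +
      2 * α / k * (1 - Real.exp (-(k * (t - t₀))))
    let y : ℝ → ℝ := fun t => Real.sqrt (R t)
    (∀ t, t₀ ≤ t → t < tbar → 0 < R t) ∧ R tbar = 0 ∧
    (∀ t, t₀ ≤ t → t < tbar → 0 < y t) ∧ y tbar = 0 ∧
    Filter.Tendsto (deriv y) (nhdsWithin tbar (Set.Iio tbar)) Filter.atBot :=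
  stmt_4_general k α t₀ y₀ hk hα
end

section
/- (Lemma 2.) Let α ≥ 0, σ > 0, k > 0, t₀ ≥ 0, θ ≥ 0, and let φ : [t₀, t₀+θ] → ℝ be continuous. Let y¹ and y² be differentiable functions on [t₀, t₀+θ] such that for i = 1, 2 and all t ∈ [t₀, t₀+θ], yⁱ(t) + (σ/2)φ(t) > 0 and (yⁱ)′(t) = α/(yⁱ(t) + (σ/2)φ(t)) − (k/2)(yⁱ(t) + (σ/2)φ(t)). Then |y²(t) − y¹(t)| ≤ |y²(t₀) − y¹(t₀)| for all t ∈ [t₀, t₀+θ]. -/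
/-!
Write `uᵢ = yᵢ + (σ/2)φ`, so that both equations read `yᵢ' = f(uᵢ)` with
`f(u) = α/u - (k/2)u`, a decreasing function on `(0, ∞)`. Since `u₂ - u₁ = y₂ - y₁`,
the derivative `2(y₂ - y₁)(f(u₂) - f(u₁))` of `(y₂ - y₁)²` is nonpositive, so the
distance between the two solutions can only shrink.
-/

open Set

lemma AntitoneOn.sub_mul_sub_nonpos {f : ℝ → ℝ} {U : Set ℝ} (hf : AntitoneOn f U)
    {a b : ℝ} (ha : a ∈ U) (hb : b ∈ U) : (a - b) * (f a - f b) ≤ 0 := by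
  rcases le_total a b with hab | hba
  · exact mul_nonpos_of_nonpos_of_nonneg (by linarith) (by linarith [hf ha hb hab])
  · exact mul_nonpos_of_nonneg_of_nonpos (by linarith) (by linarith [hf hb ha hba])

lemma antitoneOn_div_sub_mul {α c : ℝ} (hα : 0 ≤ α) (hc : 0 ≤ c) :
    AntitoneOn (fun u => α / u - c * u) (Ioi 0) := by
  intro u hu v _ huv
  have : α / v ≤ α / u := div_le_div_of_nonneg_left hα hu huv
  nlinarith

theorem antitoneOn_abs_sub_of_hasDerivWithinAt {s U : Set ℝ} (hs : Convex ℝ s)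
    {f g y₁ y₂ : ℝ → ℝ} (hf : AntitoneOn f U)
    (hU₁ : ∀ t ∈ s, y₁ t + g t ∈ U) (hU₂ : ∀ t ∈ s, y₂ t + g t ∈ U)
    (hder₁ : ∀ t ∈ s, HasDerivWithinAt y₁ (f (y₁ t + g t)) s t)
    (hder₂ : ∀ t ∈ s, HasDerivWithinAt y₂ (f (y₂ t + g t)) s t) :
    AntitoneOn (fun t => |y₂ t - y₁ t|) s := by
  have hder : ∀ t ∈ s, HasDerivWithinAt (fun t => (y₂ t - y₁ t) ^ 2)
      (2 * (y₂ t - y₁ t) * (f (y₂ t + g t) - f (y₁ t + g t))) s t := fun t ht =>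
    ((hder₂ t ht).fun_sub (hder₁ t ht)).fun_pow 2 |>.congr_deriv (by push_cast; ring)
  have hsq : AntitoneOn (fun t => (y₂ t - y₁ t) ^ 2) s := by
    refine antitoneOn_of_hasDerivWithinAt_nonpos hs
      (fun t ht => (hder t ht).continuousWithinAt)
      (fun t ht => (hder t (interior_subset ht)).mono interior_subset) fun t ht => ?_
    have ht := interior_subset ht
    have hmono := hf.sub_mul_sub_nonpos (hU₂ t ht) (hU₁ t ht)
    rw [add_sub_add_right_eq_sub] at hmono
    linarith
  exact fun a ha b hb hab => sq_le_sq.mp (hsq ha hb hab)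

theorem stmt_5_general (α σ k t₀ θ : ℝ) (hα : 0 ≤ α) (hk : 0 < k)
    (φ : ℝ → ℝ)
    (y₁ y₂ : ℝ → ℝ)
    (hpos₁ : ∀ t ∈ Set.Icc t₀ (t₀ + θ), 0 < y₁ t + σ / 2 * φ t)
    (hpos₂ : ∀ t ∈ Set.Icc t₀ (t₀ + θ), 0 < y₂ t + σ / 2 * φ t)
    (hder₁ : ∀ t ∈ Set.Icc t₀ (t₀ + θ), HasDerivWithinAt y₁
      (α / (y₁ t + σ / 2 * φ t) - k / 2 * (y₁ t + σ / 2 * φ t)) (Set.Icc t₀ (t₀ + θ)) t)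
    (hder₂ : ∀ t ∈ Set.Icc t₀ (t₀ + θ), HasDerivWithinAt y₂
      (α / (y₂ t + σ / 2 * φ t) - k / 2 * (y₂ t + σ / 2 * φ t)) (Set.Icc t₀ (t₀ + θ)) t) :
    ∀ t ∈ Set.Icc t₀ (t₀ + θ), |y₂ t - y₁ t| ≤ |y₂ t₀ - y₁ t₀| := by
  intro t ht
  have hanti := antitoneOn_abs_sub_of_hasDerivWithinAt (convex_Icc t₀ (t₀ + θ))
    (antitoneOn_div_sub_mul hα (half_pos hk).le) hpos₁ hpos₂ hder₁ hder₂
  exact hanti (left_mem_Icc.mpr (ht.1.trans ht.2)) ht ht.1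

theorem stmt_5 (α σ k t₀ θ : ℝ) (hα : 0 ≤ α) (hσ : 0 < σ) (hk : 0 < k)
    (ht₀ : 0 ≤ t₀) (hθ : 0 ≤ θ)
    (φ : ℝ → ℝ) (hφ : ContinuousOn φ (Set.Icc t₀ (t₀ + θ)))
    (y₁ y₂ : ℝ → ℝ)
    (hpos₁ : ∀ t ∈ Set.Icc t₀ (t₀ + θ), 0 < y₁ t + σ / 2 * φ t)
    (hpos₂ : ∀ t ∈ Set.Icc t₀ (t₀ + θ), 0 < y₂ t + σ / 2 * φ t)
    (hder₁ : ∀ t ∈ Set.Icc t₀ (t₀ + θ), HasDerivWithinAt y₁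
      (α / (y₁ t + σ / 2 * φ t) - k / 2 * (y₁ t + σ / 2 * φ t)) (Set.Icc t₀ (t₀ + θ)) t)
    (hder₂ : ∀ t ∈ Set.Icc t₀ (t₀ + θ), HasDerivWithinAt y₂
      (α / (y₂ t + σ / 2 * φ t) - k / 2 * (y₂ t + σ / 2 * φ t)) (Set.Icc t₀ (t₀ + θ)) t) :
    ∀ t ∈ Set.Icc t₀ (t₀ + θ), |y₂ t - y₁ t| ≤ |y₂ t₀ - y₁ t₀| :=
  stmt_5_general α σ k t₀ θ hα hk φ y₁ y₂ hpos₁ hpos₂ hder₁ hder₂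
end

section
/- Let α ≥ 0, σ > 0, k > 0, r > 0, t₀ ≥ 0, θ ≥ 0, and let φ : [t₀, t₀+θ] → ℝ be continuous with |φ(t)| ≤ r for all t ∈ [t₀, t₀+θ]. Let y be a differentiable function on [t₀, t₀+θ] with y(t₀) = y₀ ≥ σr, y(t) > (σ/2)r for all t ∈ [t₀, t₀+θ], and y′(t) = α/(y(t) + (σ/2)φ(t)) − (k/2)(y(t) + (σ/2)φ(t)) on [t₀, t₀+θ]. Then y⁻(t) ≤ y(t) ≤ y⁺(t) for all t ∈ [t₀, t₀+θ], where y⁻(t) = [(y₀ + (σ/2)r)² e^{−k(t−t₀)} + (2α/k)(1 − e^{−k(t−t₀)})]^{1/2} − (σ/2)r and y⁺(t) = [(y₀ − (σ/2)r)² e^{−k(t−t₀)} + (2α/k)(1 − e^{−k(t−t₀)})]^{1/2} + (σ/2)r. -/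
open Set Real

/-!
Writing `z = y + (σ/2)φ` for the argument of the vector field, the bound `|φ| ≤ r` traps `z`
between `u = y - (σ/2)r > 0` and `w = y + (σ/2)r`. Hence `(u²)' = 2u(α/z - kz/2) ≤ 2α - k u²` and
`(w²)' ≥ 2α - k w²`, and Grönwall's inequality for the linear equation `v' = 2α - k v` compares
`u²` and `w²` with its explicit solutions; taking square roots gives `y⁻ ≤ y ≤ y⁺`.
-/

theorem image_le_of_deriv_le_sub_mul {f f' : ℝ → ℝ} {a b A k : ℝ} (hk : k ≠ 0)
    (hf : ∀ t ∈ Icc a b, HasDerivWithinAt f (f' t) (Icc a b) t)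
    (bound : ∀ t ∈ Icc a b, f' t ≤ A - k * f t) :
    ∀ t ∈ Icc a b, f t ≤ f a * exp (-(k * (t - a))) + A / k * (1 - exp (-(k * (t - a)))) := by
  intro t ht
  have hright : ∀ x ∈ Ico a b, HasDerivWithinAt f (f' x) (Ici x) x := fun x hx =>
    (hf x (Ico_subset_Icc_self hx)).mono_of_mem_nhdsWithin (Icc_mem_nhdsGE_of_mem hx)
  have := le_gronwallBound_of_liminf_deriv_right_le (K := -k) (ε := A)
    (fun x hx => (hf x hx).continuousWithinAt)
    (fun x hx _ hr => (hright x hx).liminf_right_slope_le hr) le_rfl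
    (fun x hx => (bound x (Ico_subset_Icc_self hx)).trans_eq (by ring)) t ht
  rw [gronwallBound_of_K_ne_0 (neg_ne_zero.2 hk)] at this
  convert this using 1
  simp only [neg_mul, div_neg]
  ring

theorem le_image_of_sub_mul_le_deriv {f f' : ℝ → ℝ} {a b A k : ℝ} (hk : k ≠ 0)
    (hf : ∀ t ∈ Icc a b, HasDerivWithinAt f (f' t) (Icc a b) t)
    (bound : ∀ t ∈ Icc a b, A - k * f t ≤ f' t) :
    ∀ t ∈ Icc a b, f a * exp (-(k * (t - a))) + A / k * (1 - exp (-(k * (t - a)))) ≤ f t := by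
  intro t ht
  have := image_le_of_deriv_le_sub_mul (f := -f) (A := -A) hk (fun s hs => (hf s hs).neg)
    (fun s hs => by simp only [Pi.neg_apply]; linarith [bound s hs]) t ht
  simp only [Pi.neg_apply, neg_div] at this
  linarith

theorem two_mul_mul_div_sub_le_of_le {α k u z : ℝ} (hα : 0 ≤ α) (hk : 0 ≤ k) (hu : 0 ≤ u) (huz : u ≤ z) :
    2 * u * (α / z - k / 2 * z) ≤ 2 * α - k * u ^ 2 := by
  have hdiv : u * (α / z) ≤ α := by
    rcases hu.trans huz |>.eq_or_lt with hz | hz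
    · simpa only [← hz, div_zero, mul_zero] using hα
    · rw [mul_div_left_comm]
      exact mul_le_of_le_one_right hα ((div_le_one hz).2 huz)
  nlinarith [mul_le_mul_of_nonneg_left huz (mul_nonneg hk hu)]

theorem le_two_mul_mul_div_sub_of_le {α k z w : ℝ} (hα : 0 ≤ α) (hk : 0 ≤ k) (hz : 0 < z) (hzw : z ≤ w) :
    2 * α - k * w ^ 2 ≤ 2 * w * (α / z - k / 2 * z) := by
  have hdiv : α ≤ w * (α / z) := by
    rw [mul_div_left_comm]
    exact le_mul_of_one_le_right hα ((one_le_div hz).2 hzw)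
  nlinarith [mul_le_mul_of_nonneg_left hzw (mul_nonneg hk (hz.le.trans hzw))]

theorem stmt_7_general (α σ k r t₀ θ y₀ : ℝ) (hα : 0 ≤ α) (hσ : 0 < σ) (hk : 0 < k)
    (φ : ℝ → ℝ)
    (hφr : ∀ t ∈ Set.Icc t₀ (t₀ + θ), |φ t| ≤ r)
    (y : ℝ → ℝ) (hinit : y t₀ = y₀)
    (hpos : ∀ t ∈ Set.Icc t₀ (t₀ + θ), σ / 2 * r < y t)
    (hder : ∀ t ∈ Set.Icc t₀ (t₀ + θ), HasDerivWithinAt y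
      (α / (y t + σ / 2 * φ t) - k / 2 * (y t + σ / 2 * φ t)) (Set.Icc t₀ (t₀ + θ)) t) :
    ∀ t ∈ Set.Icc t₀ (t₀ + θ),
      Real.sqrt ((y₀ + σ / 2 * r) ^ 2 * Real.exp (-(k * (t - t₀))) +
          2 * α / k * (1 - Real.exp (-(k * (t - t₀))))) - σ / 2 * r ≤ y t ∧
      y t ≤ Real.sqrt ((y₀ - σ / 2 * r) ^ 2 * Real.exp (-(k * (t - t₀))) +
          2 * α / k * (1 - Real.exp (-(k * (t - t₀))))) + σ / 2 * r := by
  intro t ht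
  have hbetween : ∀ s ∈ Icc t₀ (t₀ + θ),
      y s - σ / 2 * r ≤ y s + σ / 2 * φ s ∧ y s + σ / 2 * φ s ≤ y s + σ / 2 * r := fun s hs => by
    have := abs_le.1 (hφr s hs)
    constructor <;> nlinarith
  have hsq : ∀ c, ∀ s ∈ Icc t₀ (t₀ + θ), HasDerivWithinAt (fun s => (y s + c) ^ 2)
      (2 * (y s + c) * (α / (y s + σ / 2 * φ s) - k / 2 * (y s + σ / 2 * φ s)))
      (Icc t₀ (t₀ + θ)) s := fun c s hs =>
    (((hder s hs).add_const c).pow 2).congr_deriv (by ring)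
  have hlower := le_image_of_sub_mul_le_deriv hk.ne' (hsq (σ / 2 * r))
    (fun s hs => le_two_mul_mul_div_sub_of_le hα hk.le (by linarith [hpos s hs, (hbetween s hs).1])
      (hbetween s hs).2) t ht
  have hupper := image_le_of_deriv_le_sub_mul hk.ne' (hsq (-(σ / 2 * r)))
    (fun s hs => two_mul_mul_div_sub_le_of_le hα hk.le (by linarith [hpos s hs]) (hbetween s hs).1) t ht
  simp only [hinit, ← sub_eq_add_neg] at hlower hupper
  constructor
  · rw [sub_le_iff_le_add, sqrt_le_left (by linarith [hpos t ht, hbetween t ht])]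
    linarith
  · linarith [le_abs_self (y t - σ / 2 * r), abs_le_sqrt hupper]

theorem stmt_7 (α σ k r t₀ θ y₀ : ℝ) (hα : 0 ≤ α) (hσ : 0 < σ) (hk : 0 < k) (hr : 0 < r)
    (ht₀ : 0 ≤ t₀) (hθ : 0 ≤ θ)
    (φ : ℝ → ℝ) (hφ : ContinuousOn φ (Set.Icc t₀ (t₀ + θ)))
    (hφr : ∀ t ∈ Set.Icc t₀ (t₀ + θ), |φ t| ≤ r)
    (y : ℝ → ℝ) (hinit : y t₀ = y₀) (hy₀ : σ * r ≤ y₀)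
    (hpos : ∀ t ∈ Set.Icc t₀ (t₀ + θ), σ / 2 * r < y t)
    (hder : ∀ t ∈ Set.Icc t₀ (t₀ + θ), HasDerivWithinAt y
      (α / (y t + σ / 2 * φ t) - k / 2 * (y t + σ / 2 * φ t)) (Set.Icc t₀ (t₀ + θ)) t) :
    ∀ t ∈ Set.Icc t₀ (t₀ + θ),
      Real.sqrt ((y₀ + σ / 2 * r) ^ 2 * Real.exp (-(k * (t - t₀))) +
          2 * α / k * (1 - Real.exp (-(k * (t - t₀))))) - σ / 2 * r ≤ y t ∧
      y t ≤ Real.sqrt ((y₀ - σ / 2 * r) ^ 2 * Real.exp (-(k * (t - t₀))) +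
          2 * α / k * (1 - Real.exp (-(k * (t - t₀))))) + σ / 2 * r :=
  stmt_7_general α σ k r t₀ θ y₀ hα hσ hk φ hφr y hinit hpos hder
end

section
/- (Corollary to Proposition 3.) Let α ≥ 0, σ > 0, k > 0, T > 0, 0 ≤ θ ≤ T, t₀ ≥ 0 and r > 0. Let φ : [t₀, t₀+θ] → ℝ be continuous with |φ(t)| ≤ r on [t₀, t₀+θ]. Let y be a differentiable function on [t₀, t₀+θ] with y(t₀) = y₀ ≥ σr, y(t) > (σ/2)r for all t ∈ [t₀, t₀+θ], and y′(t) = α/(y(t) + (σ/2)φ(t)) − (k/2)(y(t) + (σ/2)φ(t)) on [t₀, t₀+θ]. Let y⁰(t) = [y₀² e^{−k(t−t₀)} + (2α/k)(1 − e^{−k(t−t₀)})]^{1/2}. Then |y(t) − y⁰(t)| ≤ (D₁ + D₂/y₀²)·r·θ for all t ∈ [t₀, t₀+θ], where D₁ = σk/2 and D₂ = (4ασ/3)·e^{kT/2}. -/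
/-- The explicit solution `y⁰(t) = [y₀² e^{−k(t−t₀)} + (2α/k)(1 − e^{−k(t−t₀)})]^{1/2}`
of the ODE `dy/dt = α/y − (k/2)y`, `y(t₀) = y₀`. -/
noncomputable def cirY0 (k α t₀ y₀ t : ℝ) : ℝ :=
  Real.sqrt (y₀ ^ 2 * Real.exp (-(k * (t - t₀))) +
    2 * α / k * (1 - Real.exp (-(k * (t - t₀)))))

/-!
With `w = y + (σ/2)φ` the equation reads `y' = F(w)` for the decreasing rate `F(x) = α/x - (k/2)x`,
and `|w - y| ≤ d := σr/2`. Hence, writing `Y(c, t)` for the explicit solution started at `c`,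
`d + Y(y₀ - d, ·)` is an upper and `Y(y₀ + d, ·) - d` a lower fence for `y`. Since `c ↦ Y(c, t)` is
convex, both deviations `|y - Y(y₀, ·)|` are bounded by `d + Y(y₀ - d, t) - Y(y₀, t)`, and this is
estimated explicitly from `Y(c, t) = √((c e^{-kτ/2})² + A)`, `τ = t - t₀`, using
`√(q² + A) - √(p² + A) ≥ (q - p)(1 - A/(2pq))` and `1 - e^{-kτ} ≤ kτ`.
-/

open Set Real

theorem image_le_of_deriv_right_le_deriv_boundary_of_ge {f f' B B' : ℝ → ℝ} {a b : ℝ}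
    (hf : ContinuousOn f (Icc a b)) (hf' : ∀ x ∈ Ico a b, HasDerivWithinAt f (f' x) (Ici x) x)
    (ha : f a ≤ B a) (hB : ContinuousOn B (Icc a b))
    (hB' : ∀ x ∈ Ico a b, HasDerivWithinAt B (B' x) (Ici x) x)
    (bound : ∀ x ∈ Ico a b, B x ≤ f x → f' x ≤ B' x) : ∀ ⦃x⦄, x ∈ Icc a b → f x ≤ B x := by
  -- adding `r (x - a)` to `B` makes the derivative inequality strict at contact points
  have Hr : ∀ x ∈ Icc a b, ∀ r > 0, f x ≤ B x + r * (x - a) := fun x hx r hr => by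
    apply image_le_of_deriv_right_lt_deriv_boundary' hf hf'
    · rwa [sub_self, mul_zero, add_zero]
    · exact hB.add (continuousOn_const.mul (continuousOn_id.sub continuousOn_const))
    · intro x hx
      exact (hB' x hx).add (((hasDerivWithinAt_id x (Ici x)).sub_const a).const_mul r)
    · intro x hx hfx
      have hBf : B x ≤ f x := by rw [hfx]; nlinarith [hx.1]
      rw [mul_one]
      linarith [bound x hx hBf]
    · exact hx
  intro x hx
  have : ContinuousWithinAt (fun r => B x + r * (x - a)) (Ioi 0) 0 := by fun_prop
  convert! continuousWithinAt_const.closure_le _ this (Hr x hx) using 1 <;> simp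

noncomputable def odeRate (α k x : ℝ) : ℝ := α / x - k / 2 * x

theorem odeRate_antitoneOn {α k : ℝ} (hα : 0 ≤ α) (hk : 0 ≤ k) :
    AntitoneOn (odeRate α k) (Ioi 0) := by
  intro x hx x' _ hxx'
  have : α / x' ≤ α / x := div_le_div_of_nonneg_left hα hx hxx'
  unfold odeRate
  nlinarith

theorem two_mul_sqrt_sq_add_le {A : ℝ} (hA : 0 ≤ A) (m d : ℝ) :
    2 * √(m ^ 2 + A) ≤ √((m - d) ^ 2 + A) + √((m + d) ^ 2 + A) := by
  have hP : 0 ≤ (m - d) ^ 2 + A := by positivity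
  have hQ : 0 ≤ (m + d) ^ 2 + A := by positivity
  -- the product of the radicands exceeds `(m ^ 2 + A - d ^ 2) ^ 2` by `4 A d ^ 2`
  have hcross : m ^ 2 + A - d ^ 2 ≤ √((m - d) ^ 2 + A) * √((m + d) ^ 2 + A) := by
    rw [← sqrt_mul hP]
    exact le_sqrt_of_sq_le (by nlinarith [mul_nonneg hA (sq_nonneg d)])
  have h4 : 2 * √(m ^ 2 + A) = √(4 * (m ^ 2 + A)) := by
    rw [sqrt_mul' _ (by positivity), show (4 : ℝ) = 2 ^ 2 by norm_num, sqrt_sq (by norm_num)]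
  rw [h4, sqrt_le_left (by positivity)]
  nlinarith [sq_sqrt hP, sq_sqrt hQ]

theorem sqrt_sq_add_le {x A : ℝ} (hx : 0 < x) (hA : 0 ≤ A) : √(x ^ 2 + A) ≤ x + A / (2 * x) := by
  rw [sqrt_le_left (by positivity)]
  have : (x + A / (2 * x)) ^ 2 = x ^ 2 + A + (A / (2 * x)) ^ 2 := by field_simp; ring
  nlinarith [sq_nonneg (A / (2 * x))]

theorem sub_sub_sqrt_sq_add_le {p q A : ℝ} (hp : 0 < p) (hpq : p ≤ q) (hA : 0 ≤ A) :
    q - p - (√(q ^ 2 + A) - √(p ^ 2 + A)) ≤ (q - p) * A / (2 * p * q) := by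
  have hq : 0 < q := hp.trans_le hpq
  have hS_le := sqrt_sq_add_le hq hA
  have hP_le := sqrt_sq_add_le hp hA
  set S := √(q ^ 2 + A) with hS
  set P := √(p ^ 2 + A) with hP
  have hPS : P ≤ S := sqrt_le_sqrt (by nlinarith)
  have hdiff : (S - P) * (S + P) = (q - p) * (q + p) := by
    rw [show (S - P) * (S + P) = S ^ 2 - P ^ 2 by ring, hS, hP, sq_sqrt (by positivity),
      sq_sqrt (by positivity)]
    ring
  set ε := A / (2 * p * q) with hε
  have hsum : S + P ≤ (q + p) * (1 + ε) := by
    have : A / (2 * q) + A / (2 * p) = (q + p) * ε := by rw [hε]; field_simp; ring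
    linarith
  have hε0 : 0 ≤ ε := by positivity
  have hlower : q - p ≤ (S - P) * (1 + ε) := by
    have h1 : (q - p) * (q + p) ≤ (S - P) * ((q + p) * (1 + ε)) := by
      rw [← hdiff]; exact mul_le_mul_of_nonneg_left hsum (by linarith)
    have h2 : 0 < q + p := by linarith
    nlinarith
  have : (q - p) * A / (2 * p * q) = (q - p) * ε := by rw [hε]; ring
  have hupper : S - P ≤ q - p := by
    have : q ≤ S := le_sqrt_of_sq_le (by linarith)
    have : p ≤ P := le_sqrt_of_sq_le (by linarith)
    nlinarith
  rw [this]
  nlinarith [mul_le_mul_of_nonneg_right hupper hε0]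

section cirY0

variable {k α t₀ c t : ℝ}

theorem cirY0_radicand_pos (hk : 0 < k) (hα : 0 ≤ α) (hc : 0 < c) (ht : t₀ ≤ t) :
    0 < c ^ 2 * exp (-(k * (t - t₀))) + 2 * α / k * (1 - exp (-(k * (t - t₀)))) := by
  have : exp (-(k * (t - t₀))) ≤ 1 := exp_le_one_iff.2 (by nlinarith)
  have : 0 ≤ 2 * α / k * (1 - exp (-(k * (t - t₀)))) := mul_nonneg (by positivity) (by linarith)
  positivity

theorem cirY0_pos (hk : 0 < k) (hα : 0 ≤ α) (hc : 0 < c) (ht : t₀ ≤ t) :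
    0 < cirY0 k α t₀ c t :=
  sqrt_pos.2 (cirY0_radicand_pos hk hα hc ht)

theorem cirY0_self (hc : 0 ≤ c) : cirY0 k α t₀ c t₀ = c := by
  simp [cirY0, sqrt_sq hc]

theorem cirY0_hasDerivAt (hk : 0 < k) (hα : 0 ≤ α) (hc : 0 < c) (ht : t₀ ≤ t) :
    HasDerivAt (cirY0 k α t₀ c) (odeRate α k (cirY0 k α t₀ c t)) t := by
  have hE : HasDerivAt (fun s => exp (-(k * (s - t₀)))) (exp (-(k * (t - t₀))) * -k) t := by
    simpa using ((((hasDerivAt_id t).sub_const t₀).const_mul k).neg).exp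
  have hY := (((hE.const_mul (c ^ 2)).add ((hE.const_sub 1).const_mul (2 * α / k))).sqrt
    (cirY0_radicand_pos hk hα hc ht).ne')
  refine hY.congr_deriv ?_
  have hsq : cirY0 k α t₀ c t ^ 2 = c ^ 2 * exp (-(k * (t - t₀))) +
      2 * α / k * (1 - exp (-(k * (t - t₀)))) :=
    sq_sqrt (cirY0_radicand_pos hk hα hc ht).le
  have hY0 := cirY0_pos hk hα hc ht
  change _ / (2 * cirY0 k α t₀ c t) = _
  have hk0 := hk.ne'
  have hksq : k * cirY0 k α t₀ c t ^ 2 =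
      k * c ^ 2 * exp (-(k * (t - t₀))) + 2 * α * (1 - exp (-(k * (t - t₀)))) := by
    rw [hsq]; field_simp
  unfold odeRate
  field_simp
  linear_combination hksq

theorem cirY0_eq_sqrt (k α t₀ c t : ℝ) :
    cirY0 k α t₀ c t = √((c * exp (-(k * (t - t₀)) / 2)) ^ 2 +
      2 * α / k * (1 - exp (-(k * (t - t₀)) / 2) ^ 2)) := by
  rw [cirY0, mul_pow, ← exp_nat_mul]
  ring_nf

theorem two_mul_cirY0_le (hk : 0 < k) (hα : 0 ≤ α) (ht : t₀ ≤ t) (c d : ℝ) :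
    2 * cirY0 k α t₀ c t ≤ cirY0 k α t₀ (c - d) t + cirY0 k α t₀ (c + d) t := by
  simp only [cirY0_eq_sqrt, sub_mul, add_mul]
  apply two_mul_sqrt_sq_add_le
  have : exp (-(k * (t - t₀)) / 2) ≤ 1 := exp_le_one_iff.2 (by nlinarith)
  have : 0 < exp (-(k * (t - t₀)) / 2) := exp_pos _
  exact mul_nonneg (by positivity) (by nlinarith)

end cirY0

theorem add_cirY0_sub_sub_cirY0_le {k α t₀ t y₀ d : ℝ} (hk : 0 < k) (hα : 0 ≤ α) (ht : t₀ ≤ t)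
    (hd : 0 ≤ d) (hdy : 2 * d ≤ y₀) (hy₀ : 0 < y₀) :
    d + cirY0 k α t₀ (y₀ - d) t - cirY0 k α t₀ y₀ t ≤
      d * k * (t - t₀) / 2 + 2 * α * d * (t - t₀) * exp (k * (t - t₀) / 2) / y₀ ^ 2 := by
  rw [cirY0_eq_sqrt, cirY0_eq_sqrt]
  set τ := t - t₀
  have hτ : 0 ≤ τ := sub_nonneg.2 ht
  set u := exp (-(k * τ) / 2) with hu
  set A := 2 * α / k * (1 - u ^ 2) with hA
  have hu0 : 0 < u := exp_pos _
  have hu_lb : 1 - k * τ / 2 ≤ u := by linarith [add_one_le_exp (-(k * τ) / 2)]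
  have hu_inv : u * exp (k * τ / 2) = 1 := by rw [hu, ← exp_add]; ring_nf; exact exp_zero
  have hu_sq : 1 - k * τ ≤ u ^ 2 := by
    rw [hu, ← exp_nat_mul, show ((2 : ℕ) : ℝ) * (-(k * τ) / 2) = -(k * τ) by push_cast; ring]
    linarith [add_one_le_exp (-(k * τ))]
  have hA_le : A ≤ 2 * α * τ := by
    calc A ≤ 2 * α / k * (k * τ) := mul_le_mul_of_nonneg_left (by linarith) (by positivity)
      _ = 2 * α * τ := by field_simp
  have hA0 : 0 ≤ A := by
    have : u ≤ 1 := exp_le_one_iff.2 (by nlinarith)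
    exact mul_nonneg (by positivity) (by nlinarith)
  have hp : 0 < (y₀ - d) * u := mul_pos (by linarith) hu0
  have hkey := sub_sub_sqrt_sq_add_le hp (by nlinarith) hA0 (q := y₀ * u)
  have hcorr : (y₀ * u - (y₀ - d) * u) * A / (2 * ((y₀ - d) * u) * (y₀ * u)) =
      d * A * exp (k * τ / 2) / (2 * (y₀ - d) * y₀) := by
    rw [div_eq_div_iff (by positivity) (by nlinarith)]
    linear_combination (-2 * d * A * (y₀ - d) * y₀ * u) * hu_inv
  calc d + √(((y₀ - d) * u) ^ 2 + A) - √((y₀ * u) ^ 2 + A)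
      = d * (1 - u) +
          (y₀ * u - (y₀ - d) * u - (√((y₀ * u) ^ 2 + A) - √(((y₀ - d) * u) ^ 2 + A))) := by
        ring
    _ ≤ d * (k * τ / 2) + d * A * exp (k * τ / 2) / (2 * (y₀ - d) * y₀) := by
        rw [← hcorr]; gcongr; linarith
    _ ≤ d * (k * τ / 2) + d * (2 * α * τ) * exp (k * τ / 2) / (y₀ * y₀) := by
        gcongr; linarith
    _ = d * k * τ / 2 + 2 * α * d * τ * exp (k * τ / 2) / y₀ ^ 2 := by ring

section Fences

variable {α k a b d : ℝ} {g y : ℝ → ℝ}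

theorem le_add_cirY0_of_hasDerivWithinAt (hα : 0 ≤ α) (hk : 0 < k) (hdy : d < y a)
    (hg : ∀ t ∈ Icc a b, |g t| ≤ d)
    (hder : ∀ t ∈ Icc a b, HasDerivWithinAt y (odeRate α k (y t + g t)) (Icc a b) t) :
    ∀ t ∈ Icc a b, y t ≤ d + cirY0 k α a (y a - d) t := by
  have hc : 0 < y a - d := by linarith
  refine image_le_of_deriv_right_le_deriv_boundary_of_ge
    (fun t ht => (hder t ht).continuousWithinAt)
    (fun t ht => (hder t (Ico_subset_Icc_self ht)).mono_of_mem_nhdsWithin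
      (Icc_mem_nhdsGE_of_mem ht)) ?_
    (fun t ht => ((cirY0_hasDerivAt hk hα hc ht.1).const_add d).continuousAt.continuousWithinAt)
    (fun t ht => ((cirY0_hasDerivAt hk hα hc ht.1).const_add d).hasDerivWithinAt) ?_
  · rw [cirY0_self hc.le]; linarith
  · intro t ht hle
    have hY := cirY0_pos hk hα hc ht.1
    have hgt := (abs_le.1 (hg t (Ico_subset_Icc_self ht))).1
    exact odeRate_antitoneOn hα hk.le hY (hY.trans_le (by linarith)) (by linarith)

theorem cirY0_sub_le_of_hasDerivWithinAt (hα : 0 ≤ α) (hk : 0 < k)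
    (hg : ∀ t ∈ Icc a b, |g t| ≤ d) (hw : ∀ t ∈ Icc a b, 0 < y t + g t)
    (hder : ∀ t ∈ Icc a b, HasDerivWithinAt y (odeRate α k (y t + g t)) (Icc a b) t) :
    ∀ t ∈ Icc a b, cirY0 k α a (y a + d) t - d ≤ y t := by
  intro t ht
  have ha : a ∈ Icc a b := left_mem_Icc.2 (ht.1.trans ht.2)
  have hc : 0 < y a + d := by linarith [hw a ha, (abs_le.1 (hg a ha)).2]
  refine image_le_of_deriv_right_le_deriv_boundary_of_ge (B := y)
    (fun t ht => ((cirY0_hasDerivAt hk hα hc ht.1).sub_const d).continuousAt.continuousWithinAt)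
    (fun t ht => ((cirY0_hasDerivAt hk hα hc ht.1).sub_const d).hasDerivWithinAt) ?_
    (fun t ht => (hder t ht).continuousWithinAt)
    (fun t ht => (hder t (Ico_subset_Icc_self ht)).mono_of_mem_nhdsWithin
      (Icc_mem_nhdsGE_of_mem ht)) ?_ ht
  · rw [cirY0_self hc.le]; linarith
  · intro t ht hle
    have ht' := Ico_subset_Icc_self ht
    have hY := cirY0_pos hk hα hc ht.1
    have hgt := (abs_le.1 (hg t ht')).2
    exact odeRate_antitoneOn hα hk.le (hw t ht') hY (by linarith)

end Fences

theorem stmt_9_general (α σ k T θ t₀ r y₀ : ℝ) (hα : 0 ≤ α) (hσ : 0 < σ) (hk : 0 < k)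
    (hθT : θ ≤ T) (hr : 0 < r) (φ : ℝ → ℝ)
    (hφr : ∀ t ∈ Set.Icc t₀ (t₀ + θ), |φ t| ≤ r)
    (y : ℝ → ℝ) (hinit : y t₀ = y₀) (hy₀ : σ * r ≤ y₀)
    (hpos : ∀ t ∈ Set.Icc t₀ (t₀ + θ), σ / 2 * r < y t)
    (hder : ∀ t ∈ Set.Icc t₀ (t₀ + θ), HasDerivWithinAt y
      (α / (y t + σ / 2 * φ t) - k / 2 * (y t + σ / 2 * φ t)) (Set.Icc t₀ (t₀ + θ)) t) :
    let D₁ : ℝ := σ * k / 2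
    let D₂ : ℝ := 4 * α * σ / 3 * Real.exp (k * T / 2)
    ∀ t ∈ Set.Icc t₀ (t₀ + θ),
      |y t - cirY0 k α t₀ y₀ t| ≤ (D₁ + D₂ / y₀ ^ 2) * r * θ := by
  intro D₁ D₂ t ht
  set d := σ * r / 2 with hd_def
  have hd : 0 < d := by positivity
  have hg : ∀ s ∈ Icc t₀ (t₀ + θ), |σ / 2 * φ s| ≤ d := fun s hs => by
    rw [abs_mul, abs_of_pos (half_pos hσ)]
    exact (mul_le_mul_of_nonneg_left (hφr s hs) (half_pos hσ).le).trans_eq (by ring)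
  have hw_pos : ∀ s ∈ Icc t₀ (t₀ + θ), 0 < y s + σ / 2 * φ s := fun s hs => by
    linarith [hpos s hs, (abs_le.1 (hg s hs)).1, hd_def]
  have hupper := le_add_cirY0_of_hasDerivWithinAt hα hk (by linarith [hinit, hd_def]) hg hder t ht
  have hlower := cirY0_sub_le_of_hasDerivWithinAt hα hk hg hw_pos hder t ht
  rw [hinit] at hupper hlower
  have hconvex := two_mul_cirY0_le hk hα ht.1 y₀ d
  have hest := add_cirY0_sub_sub_cirY0_le (y₀ := y₀) hk hα ht.1 hd.le (by linarith [hd_def])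
    (by linarith)
  have hτ : t - t₀ ≤ θ := by linarith [ht.2]
  have hτ0 : 0 ≤ t - t₀ := by linarith [ht.1]
  have hexp : exp (k * (t - t₀) / 2) ≤ exp (k * T / 2) := by gcongr; linarith
  have hweak : d * k * (t - t₀) / 2 + 2 * α * d * (t - t₀) * exp (k * (t - t₀) / 2) / y₀ ^ 2 ≤
      (D₁ + D₂ / y₀ ^ 2) * r * θ := by
    have hθ : 0 ≤ θ := hτ0.trans hτ
    calc _ ≤ d * k * θ / 2 + 2 * α * d * θ * exp (k * T / 2) / y₀ ^ 2 := by
          gcongr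
      _ ≤ _ := by
        have h₁ : 0 ≤ σ * k * r * θ := mul_nonneg (by positivity) hθ
        have h₂ : 0 ≤ α * σ * r * θ * exp (k * T / 2) / y₀ ^ 2 :=
          div_nonneg (mul_nonneg (mul_nonneg (by positivity) hθ) (exp_pos _).le) (sq_nonneg _)
        simp only [D₁, D₂]
        rw [hd_def]
        linear_combination (1 / 4) * h₁ + (1 / 3) * h₂
  rw [abs_le]
  constructor <;> linarith

theorem stmt_9 (α σ k T θ t₀ r y₀ : ℝ) (hα : 0 ≤ α) (hσ : 0 < σ) (hk : 0 < k)
    (hT : 0 < T) (hθ0 : 0 ≤ θ) (hθT : θ ≤ T) (ht₀ : 0 ≤ t₀) (hr : 0 < r)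
    (φ : ℝ → ℝ) (hφ : ContinuousOn φ (Set.Icc t₀ (t₀ + θ)))
    (hφr : ∀ t ∈ Set.Icc t₀ (t₀ + θ), |φ t| ≤ r)
    (y : ℝ → ℝ) (hinit : y t₀ = y₀) (hy₀ : σ * r ≤ y₀)
    (hpos : ∀ t ∈ Set.Icc t₀ (t₀ + θ), σ / 2 * r < y t)
    (hder : ∀ t ∈ Set.Icc t₀ (t₀ + θ), HasDerivWithinAt y
      (α / (y t + σ / 2 * φ t) - k / 2 * (y t + σ / 2 * φ t)) (Set.Icc t₀ (t₀ + θ)) t) :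
    let D₁ : ℝ := σ * k / 2
    let D₂ : ℝ := 4 * α * σ / 3 * Real.exp (k * T / 2)
    ∀ t ∈ Set.Icc t₀ (t₀ + θ),
      |y t - cirY0 k α t₀ y₀ t| ≤ (D₁ + D₂ / y₀ ^ 2) * r * θ :=
  stmt_9_general α σ k T θ t₀ r y₀ hα hσ hk hθT hr φ hφr y hinit hy₀ hpos hder
end

section
/- Let α ≥ 0, σ > 0, k > 0, r > 0, t₀ ≥ 0, and y₀ ≥ σr. Define y⁻(t) = [(y₀ + (σ/2)r)² e^{−k(t−t₀)} + (2α/k)(1 − e^{−k(t−t₀)})]^{1/2} − (σ/2)r and y⁺(t) = [(y₀ − (σ/2)r)² e^{−k(t−t₀)} + (2α/k)(1 − e^{−k(t−t₀)})]^{1/2} + (σ/2)r. Then for every t ≥ t₀, 0 ≤ y⁺(t) − y⁻(t) ≤ σr(1 − e^{−k(t−t₀)/2}) + (ασr/(k(y₀² − σ²r²/4)))·(e^{k(t−t₀)/2} − e^{−k(t−t₀)/2}). -/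
/-!
Put `s = e^{-k(t-t₀)/2}`, `c = σr/2` and `β = (2α/k)(1 - s²) ≥ 0`. Then
`y⁺ - y⁻ = 2c - (√(((y₀+c)s)² + β) - √(((y₀-c)s)² + β))`.
Since `x ↦ √(x² + β)` is 1-Lipschitz, the bracket is at most `2cs ≤ 2c`, so `y⁺ ≥ y⁻`.
Rationalising the bracket and using `√(x² + β) ≤ x + β/(2x)` bounds it below by
`2cs (1 - β / (2 s² (y₀² - c²)))`, which is exactly the claimed upper bound.
-/

open Real

lemma sqrt_sq_add_sub_sqrt_sq_add_le_abs (a b β : ℝ) (hβ : 0 ≤ β) :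
    √(a ^ 2 + β) - √(b ^ 2 + β) ≤ |a - b| := by
  have hb : |b| ≤ √(b ^ 2 + β) := by
    rw [← sqrt_sq_eq_abs]; exact sqrt_le_sqrt (by linarith)
  have hsq : a ^ 2 + β ≤ (√(b ^ 2 + β) + |a - b|) ^ 2 := by
    have hbab : b * (a - b) ≤ |b| * |a - b| := by
      rw [← abs_mul]; exact le_abs_self _
    nlinarith [sq_sqrt (by positivity : 0 ≤ b ^ 2 + β), sq_abs (a - b),
      mul_le_mul_of_nonneg_right hb (abs_nonneg (a - b))]
  have := sqrt_le_sqrt hsq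
  rw [sqrt_sq (by positivity)] at this
  linarith

lemma sqrt_sq_add_le_add_div {a β : ℝ} (ha : 0 < a) (hβ : 0 ≤ β) :
    √(a ^ 2 + β) ≤ a + β / (2 * a) := by
  rw [sqrt_le_left (by positivity)]
  have : (a + β / (2 * a)) ^ 2 = a ^ 2 + β + (β / (2 * a)) ^ 2 := by
    field_simp; ring
  nlinarith [sq_nonneg (β / (2 * a))]

lemma sub_mul_one_sub_le_sqrt_sq_add_sub_sqrt_sq_add {p q β : ℝ} (hq : 0 < q) (hqp : q ≤ p)
    (hβ : 0 ≤ β) :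
    (p - q) * (1 - β / (2 * p * q)) ≤ √(p ^ 2 + β) - √(q ^ 2 + β) := by
  have hp : 0 < p := hq.trans_le hqp
  set x := β / (2 * p * q)
  set S := √(p ^ 2 + β) + √(q ^ 2 + β)
  have hS : 0 < S := by positivity
  have hSle : S ≤ (p + q) * (1 + x) := by
    have : (p + q) * (1 + x) = p + β / (2 * p) + (q + β / (2 * q)) := by
      simp only [x]; field_simp; ring
    rw [this]
    exact add_le_add (sqrt_sq_add_le_add_div hp hβ) (sqrt_sq_add_le_add_div hq hβ)
  have hprod : (√(p ^ 2 + β) - √(q ^ 2 + β)) * S = p ^ 2 - q ^ 2 := by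
    linear_combination sq_sqrt (by positivity : 0 ≤ p ^ 2 + β) -
      sq_sqrt (by positivity : 0 ≤ q ^ 2 + β)
  refine le_of_mul_le_mul_right ?_ hS
  rw [hprod]
  rcases le_or_gt x 1 with hx | hx
  · calc (p - q) * (1 - x) * S ≤ (p - q) * (1 - x) * ((p + q) * (1 + x)) :=
          mul_le_mul_of_nonneg_left hSle (mul_nonneg (by linarith) (by linarith))
      _ = (p ^ 2 - q ^ 2) * (1 - x ^ 2) := by ring
      _ ≤ p ^ 2 - q ^ 2 := by
        nlinarith [mul_nonneg (by nlinarith : 0 ≤ p ^ 2 - q ^ 2) (sq_nonneg x)]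
  · have : (p - q) * (1 - x) ≤ 0 := mul_nonpos_of_nonneg_of_nonpos (by linarith) (by linarith)
    nlinarith

theorem stmt_10_general (α σ k r t₀ y₀ : ℝ) (hα : 0 ≤ α) (hσ : 0 < σ) (hk : 0 < k)
    (hr : 0 < r) (hy₀ : σ * r ≤ y₀) :
    let yminus : ℝ → ℝ := fun t =>
      Real.sqrt ((y₀ + σ / 2 * r) ^ 2 * Real.exp (-(k * (t - t₀))) +
        2 * α / k * (1 - Real.exp (-(k * (t - t₀))))) - σ / 2 * r
    let yplus : ℝ → ℝ := fun t =>
      Real.sqrt ((y₀ - σ / 2 * r) ^ 2 * Real.exp (-(k * (t - t₀))) +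
        2 * α / k * (1 - Real.exp (-(k * (t - t₀))))) + σ / 2 * r
    ∀ t, t₀ ≤ t →
      0 ≤ yplus t - yminus t ∧
      yplus t - yminus t ≤ σ * r * (1 - Real.exp (-(k * (t - t₀)) / 2)) +
        α * σ * r / (k * (y₀ ^ 2 - σ ^ 2 * r ^ 2 / 4)) *
          (Real.exp (k * (t - t₀) / 2) - Real.exp (-(k * (t - t₀)) / 2)) := by
  intro yminus yplus t ht
  set c := σ / 2 * r
  set s := exp (-(k * (t - t₀)) / 2)
  set β := 2 * α / k * (1 - s ^ 2)
  have hc : 0 < c := by positivity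
  have hyc : 2 * c ≤ y₀ := by simp only [c]; linarith
  have hs : 0 < s := exp_pos _
  have hs1 : s ≤ 1 := exp_le_one_iff.2 (by nlinarith)
  have hβ : 0 ≤ β := mul_nonneg (by positivity) (by nlinarith)
  have hexp : exp (-(k * (t - t₀))) = s ^ 2 := by rw [← exp_nat_mul]; push_cast; ring_nf
  have hexp_inv : exp (k * (t - t₀) / 2) = s⁻¹ := by rw [← exp_neg]; ring_nf
  have hdiff : yplus t - yminus t =
      2 * c - (√(((y₀ + c) * s) ^ 2 + β) - √(((y₀ - c) * s) ^ 2 + β)) := by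
    simp only [yplus, yminus, hexp, mul_pow]; ring
  have hq : 0 < (y₀ - c) * s := mul_pos (by linarith) hs
  have hbracket_ge := sub_mul_one_sub_le_sqrt_sq_add_sub_sqrt_sq_add hq
    (mul_le_mul_of_nonneg_right (by linarith : y₀ - c ≤ y₀ + c) hs.le) hβ
  have hbracket_le := sqrt_sq_add_sub_sqrt_sq_add_le_abs ((y₀ + c) * s) ((y₀ - c) * s) β hβ
  have hpq : (y₀ + c) * s - (y₀ - c) * s = 2 * c * s := by ring
  rw [hpq, abs_of_pos (by positivity)] at hbracket_le
  rw [hpq] at hbracket_ge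
  have hbound :
      σ * r * (1 - s) + α * σ * r / (k * (y₀ ^ 2 - σ ^ 2 * r ^ 2 / 4)) * (s⁻¹ - s) =
      2 * c - 2 * c * s * (1 - β / (2 * ((y₀ + c) * s) * ((y₀ - c) * s))) := by
    have hy_add : y₀ + c ≠ 0 := by linarith
    have hy_sub : y₀ - c ≠ 0 := by linarith
    rw [show y₀ ^ 2 - σ ^ 2 * r ^ 2 / 4 = (y₀ + c) * (y₀ - c) by ring]
    simp only [β]
    field_simp
    simp only [c]
    ring
  rw [hdiff, hexp_inv, hbound]
  exact ⟨by nlinarith, by linarith⟩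

theorem stmt_10 (α σ k r t₀ y₀ : ℝ) (hα : 0 ≤ α) (hσ : 0 < σ) (hk : 0 < k)
    (hr : 0 < r) (ht₀ : 0 ≤ t₀) (hy₀ : σ * r ≤ y₀) :
    let yminus : ℝ → ℝ := fun t =>
      Real.sqrt ((y₀ + σ / 2 * r) ^ 2 * Real.exp (-(k * (t - t₀))) +
        2 * α / k * (1 - Real.exp (-(k * (t - t₀))))) - σ / 2 * r
    let yplus : ℝ → ℝ := fun t =>
      Real.sqrt ((y₀ - σ / 2 * r) ^ 2 * Real.exp (-(k * (t - t₀))) +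
        2 * α / k * (1 - Real.exp (-(k * (t - t₀))))) + σ / 2 * r
    ∀ t, t₀ ≤ t →
      0 ≤ yplus t - yminus t ∧
      yplus t - yminus t ≤ σ * r * (1 - Real.exp (-(k * (t - t₀)) / 2)) +
        α * σ * r / (k * (y₀ ^ 2 - σ ^ 2 * r ^ 2 / 4)) *
          (Real.exp (k * (t - t₀) / 2) - Real.exp (-(k * (t - t₀)) / 2)) :=
  stmt_10_general α σ k r t₀ y₀ hα hσ hk hr hy₀
end

section
/- Let α ≥ 0, k > 0, σ > 0, r > 0, t₀ ≥ 0 and y₀ > σr/2. Define z±(t) = [(y₀ ± (σ/2)r)² e^{−k(t−t₀)} + (2α/k)(1 − e^{−k(t−t₀)})]^{1/2}. Then for all t ≥ t₀: z⁺(t) − z⁻(t) = 2 y₀ σ r e^{−k(t−t₀)} / (z⁺(t) + z⁻(t)), and z⁺(t) − z⁻(t) ≥ σr·e^{−k(t−t₀)/2}·(1 − α(e^{k(t−t₀)} − 1)/(k(y₀² − σ²r²/4))). -/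
/-!
Write `s = e^{-k(t-t₀)/2}`, `p = (y₀ + σr/2) s`, `q = (y₀ - σr/2) s` and
`m = (2α/k)(1 - s²) ≥ 0`, so that `z₊ = √(p² + m)` and `z₋ = √(q² + m)`. The identity is
`z₊² - z₋² = p² - q² = 2y₀σr s²`. For the bound, the tangent line of `√` at `p²` (AM-GM) gives
`√(p² + m) ≤ p + m/(2p)`, hence `z₊ + z₋ ≤ (p + q)(1 + u)` with
`u = m/(2pq) = α(e^{k(t-t₀)} - 1)/(k(y₀² - σ²r²/4))`. So `z₊ - z₋ ≥ (p - q)/(1 + u) ≥ σr s (1 - u)`.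
-/

namespace Real

lemma sqrt_sub_sqrt_eq_div {x y : ℝ} (hx : 0 ≤ x) (hy : 0 ≤ y) :
    √x - √y = (x - y) / (√x + √y) := by
  rcases eq_or_ne (√x + √y) 0 with h | h
  · have hx0 : x = 0 := (sqrt_eq_zero hx).1 (by linarith [sqrt_nonneg x, sqrt_nonneg y])
    have hy0 : y = 0 := (sqrt_eq_zero hy).1 (by linarith [sqrt_nonneg x, sqrt_nonneg y])
    simp [hx0, hy0]
  · rw [eq_div_iff h]
    nlinarith [sq_sqrt hx, sq_sqrt hy]

lemma sqrt_le_sq_add_div_two_mul {p y : ℝ} (hp : 0 < p) (hy : 0 ≤ y) :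
    √y ≤ (p ^ 2 + y) / (2 * p) := by
  rw [le_div_iff₀ (by positivity)]
  nlinarith [sq_nonneg (√y - p), sq_sqrt hy]

lemma div_one_add_le_sqrt_sq_add_sub_sqrt_sq_add {p q m : ℝ} (hq : 0 < q) (hqp : q ≤ p)
    (hm : 0 ≤ m) : (p - q) / (1 + m / (2 * p * q)) ≤ √(p ^ 2 + m) - √(q ^ 2 + m) := by
  have hp : 0 < p := hq.trans_le hqp
  have hsum : √(p ^ 2 + m) + √(q ^ 2 + m) ≤ (p + q) * (1 + m / (2 * p * q)) :=
    calc √(p ^ 2 + m) + √(q ^ 2 + m)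
        ≤ (p ^ 2 + (p ^ 2 + m)) / (2 * p) + (q ^ 2 + (q ^ 2 + m)) / (2 * q) :=
          add_le_add (sqrt_le_sq_add_div_two_mul hp (by positivity))
            (sqrt_le_sq_add_div_two_mul hq (by positivity))
      _ = (p + q) * (1 + m / (2 * p * q)) := by field_simp; ring
  rw [sqrt_sub_sqrt_eq_div (by positivity) (by positivity)]
  calc (p - q) / (1 + m / (2 * p * q))
      = (p ^ 2 + m - (q ^ 2 + m)) / ((p + q) * (1 + m / (2 * p * q))) := by
        field_simp; ring
    _ ≤ (p ^ 2 + m - (q ^ 2 + m)) / (√(p ^ 2 + m) + √(q ^ 2 + m)) :=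
        div_le_div_of_nonneg_left (by nlinarith) (by positivity) hsum

end Real

lemma one_sub_le_one_div_one_add {u : ℝ} (hu : -1 < u) : 1 - u ≤ 1 / (1 + u) := by
  rw [le_div_iff₀ (by linarith)]
  nlinarith [sq_nonneg u]

open Real

lemma mul_one_sub_exp_neg_nonneg {c τ : ℝ} (hc : 0 ≤ c) (hτ : 0 ≤ τ) :
    0 ≤ c * (1 - exp (-τ)) :=
  mul_nonneg hc (sub_nonneg.2 (exp_le_one_iff.2 (neg_nonpos.2 hτ)))

lemma sub_mul_exp_neg_half_mul_le_sqrt_sub_sqrt {a b α k τ : ℝ} (hb : 0 < b) (hba : b ≤ a)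
    (hα : 0 ≤ α) (hk : 0 < k) (hτ : 0 ≤ τ) :
    (a - b) * exp (-τ / 2) * (1 - α * (exp τ - 1) / (k * (a * b))) ≤
      √(a ^ 2 * exp (-τ) + 2 * α / k * (1 - exp (-τ))) -
        √(b ^ 2 * exp (-τ) + 2 * α / k * (1 - exp (-τ))) := by
  set s := exp (-τ / 2)
  set m := 2 * α / k * (1 - exp (-τ))
  have hs : 0 < s := exp_pos _
  have hexp_neg : exp (-τ) = s ^ 2 := by rw [← exp_nat_mul]; ring_nf
  have hm : 0 ≤ m := mul_one_sub_exp_neg_nonneg (by positivity) hτ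
  have hbs : 0 < b * s := mul_pos hb hs
  have hu : α * (exp τ - 1) / (k * (a * b)) = m / (2 * (a * s) * (b * s)) := by
    have ha : a ≠ 0 := (hb.trans_le hba).ne'
    rw [← inv_inv (exp τ), ← exp_neg]
    simp only [m, hexp_neg]
    field_simp
  have hu_nonneg : 0 ≤ m / (2 * (a * s) * (b * s)) := by
    have : 0 < a * s := mul_pos (hb.trans_le hba) hs
    positivity
  rw [hexp_neg, ← mul_pow, ← mul_pow, hu]
  calc (a - b) * s * (1 - m / (2 * (a * s) * (b * s)))
      ≤ (a - b) * s * (1 / (1 + m / (2 * (a * s) * (b * s)))) :=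
        mul_le_mul_of_nonneg_left (one_sub_le_one_div_one_add (by linarith))
          (mul_nonneg (sub_nonneg.2 hba) hs.le)
    _ = (a * s - b * s) / (1 + m / (2 * (a * s) * (b * s))) := by ring
    _ ≤ _ := div_one_add_le_sqrt_sq_add_sub_sqrt_sq_add hbs
          (mul_le_mul_of_nonneg_right hba hs.le) hm

theorem stmt_11_general (α k σ r t₀ y₀ : ℝ) (hα : 0 ≤ α) (hk : 0 < k) (hσ : 0 < σ)
    (hr : 0 < r) (hy₀ : σ * r / 2 < y₀) :
    let zplus : ℝ → ℝ := fun t =>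
      Real.sqrt ((y₀ + σ / 2 * r) ^ 2 * Real.exp (-(k * (t - t₀))) +
        2 * α / k * (1 - Real.exp (-(k * (t - t₀)))))
    let zminus : ℝ → ℝ := fun t =>
      Real.sqrt ((y₀ - σ / 2 * r) ^ 2 * Real.exp (-(k * (t - t₀))) +
        2 * α / k * (1 - Real.exp (-(k * (t - t₀)))))
    ∀ t, t₀ ≤ t →
      zplus t - zminus t =
        2 * y₀ * σ * r * Real.exp (-(k * (t - t₀))) / (zplus t + zminus t) ∧
      σ * r * Real.exp (-(k * (t - t₀)) / 2) *
          (1 - α * (Real.exp (k * (t - t₀)) - 1) / (k * (y₀ ^ 2 - σ ^ 2 * r ^ 2 / 4)))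
        ≤ zplus t - zminus t := by
  intro zplus zminus t ht
  have hτ : 0 ≤ k * (t - t₀) := mul_nonneg hk.le (sub_nonneg.2 ht)
  have hm := mul_one_sub_exp_neg_nonneg (c := 2 * α / k) (by positivity) hτ
  refine ⟨?_, ?_⟩
  · rw [sqrt_sub_sqrt_eq_div (by positivity) (by positivity)]
    congr 1
    ring
  · have := sub_mul_exp_neg_half_mul_le_sqrt_sub_sqrt (a := y₀ + σ / 2 * r) (b := y₀ - σ / 2 * r)
      (by linarith) (by nlinarith) hα hk hτ
    convert this using 3 <;> ring

theorem stmt_11 (α k σ r t₀ y₀ : ℝ) (hα : 0 ≤ α) (hk : 0 < k) (hσ : 0 < σ)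
    (hr : 0 < r) (ht₀ : 0 ≤ t₀) (hy₀ : σ * r / 2 < y₀) :
    let zplus : ℝ → ℝ := fun t =>
      Real.sqrt ((y₀ + σ / 2 * r) ^ 2 * Real.exp (-(k * (t - t₀))) +
        2 * α / k * (1 - Real.exp (-(k * (t - t₀)))))
    let zminus : ℝ → ℝ := fun t =>
      Real.sqrt ((y₀ - σ / 2 * r) ^ 2 * Real.exp (-(k * (t - t₀))) +
        2 * α / k * (1 - Real.exp (-(k * (t - t₀)))))
    ∀ t, t₀ ≤ t →
      zplus t - zminus t =
        2 * y₀ * σ * r * Real.exp (-(k * (t - t₀))) / (zplus t + zminus t) ∧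
      σ * r * Real.exp (-(k * (t - t₀)) / 2) *
          (1 - α * (Real.exp (k * (t - t₀)) - 1) / (k * (y₀ ^ 2 - σ ^ 2 * r ^ 2 / 4)))
        ≤ zplus t - zminus t :=
  stmt_11_general α k σ r t₀ y₀ hα hk hσ hr hy₀
end

section
/- (Induction core of Theorem 8.) Let σ > 0, k > 0, D₁ > 0, D₂ > 0, T > 0, η > 0, and set r₀ = min(η/σ, η/((D₁ + D₂/η²)·T)). Let 0 < r < r₀. Let (y_m)_{m≥0}, (ȳ_m)_{m≥0} be sequences of reals and (Δ_m)_{m≥0} a sequence of nonnegative reals with Σ_{m=0}^{n} Δ_m ≤ T for every n ≥ 0. Assume y_m ≥ 2η for all m, ȳ₀ = y₀, and for every n ≥ 0, |y_{n+1} − ȳ_{n+1}| ≤ r·Σ_{m=0}^{n} (D₁ + D₂/ȳ_m²)·Δ_m. Then ȳ_m ≥ η ≥ rσ for all m ≥ 0, and |y_{n+1} − ȳ_{n+1}| ≤ r·(D₁ + D₂/η²)·T for every n ≥ 0. -/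
/-! Bootstrap by strong induction: while `ȳ_m ≥ η` for all `m ≤ n`, every weight
`D₁ + D₂ / ȳ_m²` is at most `C := D₁ + D₂ / η²`, so the error at step `n + 1` is at most
`r C T ≤ η`; as `y_{n+1} ≥ 2η`, this forces `ȳ_{n+1} ≥ η`. -/

open Finset

theorem add_div_sq_le_add_div_sq {D₁ D₂ η x : ℝ} (hD₂ : 0 ≤ D₂) (hη : 0 < η) (hx : η ≤ x) :
    D₁ + D₂ / x ^ 2 ≤ D₁ + D₂ / η ^ 2 := by
  gcongr

theorem sum_mul_le_mul_sum {ι : Type*} {s : Finset ι} {f Δ : ι → ℝ} {C : ℝ}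
    (hΔ : ∀ i ∈ s, 0 ≤ Δ i) (hf : ∀ i ∈ s, f i ≤ C) :
    ∑ i ∈ s, f i * Δ i ≤ C * ∑ i ∈ s, Δ i := by
  rw [mul_sum]
  exact sum_le_sum fun i hi => mul_le_mul_of_nonneg_right (hf i hi) (hΔ i hi)

theorem mul_sum_add_div_sq_le {ι : Type*} {s : Finset ι} {x Δ : ι → ℝ} {D₁ D₂ η r T : ℝ}
    (hD₁ : 0 ≤ D₁) (hD₂ : 0 ≤ D₂) (hη : 0 < η) (hr : 0 ≤ r) (hΔ : ∀ i, 0 ≤ Δ i)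
    (hΔT : ∑ i ∈ s, Δ i ≤ T) (hx : ∀ i ∈ s, η ≤ x i) :
    r * ∑ i ∈ s, (D₁ + D₂ / x i ^ 2) * Δ i ≤ r * (D₁ + D₂ / η ^ 2) * T := by
  rw [mul_assoc]
  gcongr
  calc ∑ i ∈ s, (D₁ + D₂ / x i ^ 2) * Δ i
      ≤ (D₁ + D₂ / η ^ 2) * ∑ i ∈ s, Δ i :=
        sum_mul_le_mul_sum (fun i _ => hΔ i) fun i hi => add_div_sq_le_add_div_sq hD₂ hη (hx i hi)
    _ ≤ (D₁ + D₂ / η ^ 2) * T := by gcongr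

theorem forall_le_of_abs_sub_le {y x : ℕ → ℝ} {η : ℝ} (hy : ∀ m, 2 * η ≤ y m)
    (h : ∀ m, (∀ k < m, η ≤ x k) → |y m - x m| ≤ η) : ∀ m, η ≤ x m := by
  intro m
  induction m using Nat.strong_induction_on with
  | _ m ih =>
    have := abs_le.mp (h m ih)
    linarith [hy m]

theorem stmt_13_general (σ D₁ D₂ T η r : ℝ) (hσ : 0 < σ)
    (hD₁ : 0 < D₁) (hD₂ : 0 < D₂) (hT : 0 < T) (hη : 0 < η)
    (hr : 0 < r) (hr₀ : r < min (η / σ) (η / ((D₁ + D₂ / η ^ 2) * T)))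
    (y ybar : ℕ → ℝ) (Δ : ℕ → ℝ) (hΔ : ∀ m, 0 ≤ Δ m)
    (hΔT : ∀ n, ∑ m ∈ Finset.range (n + 1), Δ m ≤ T)
    (hy : ∀ m, 2 * η ≤ y m) (h0 : ybar 0 = y 0)
    (herr : ∀ n, |y (n + 1) - ybar (n + 1)| ≤
      r * ∑ m ∈ Finset.range (n + 1), (D₁ + D₂ / (ybar m) ^ 2) * Δ m) :
    (∀ m, η ≤ ybar m) ∧ r * σ ≤ η ∧
    (∀ n, |y (n + 1) - ybar (n + 1)| ≤ r * (D₁ + D₂ / η ^ 2) * T) := by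
  have hrCT : r * (D₁ + D₂ / η ^ 2) * T ≤ η := by
    rw [mul_assoc]
    exact mul_le_of_le_div₀ hη.le (by positivity) (hr₀.le.trans (min_le_right _ _))
  have herr_le (n : ℕ) (hbar : ∀ m ∈ range (n + 1), η ≤ ybar m) :
      |y (n + 1) - ybar (n + 1)| ≤ r * (D₁ + D₂ / η ^ 2) * T :=
    (herr n).trans (mul_sum_add_div_sq_le hD₁.le hD₂.le hη hr.le hΔ (hΔT n) hbar)
  have hbar : ∀ m, η ≤ ybar m := by
    refine forall_le_of_abs_sub_le hy fun m hm => ?_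
    cases m with
    | zero => simpa [h0] using hη.le
    | succ n => exact (herr_le n fun k hk => hm k (mem_range.mp hk)).trans hrCT
  exact ⟨hbar, mul_le_of_le_div₀ hη.le hσ.le (hr₀.le.trans (min_le_left _ _)),
    fun n => herr_le n fun m _ => hbar m⟩

theorem stmt_13 (σ k D₁ D₂ T η r : ℝ) (hσ : 0 < σ) (hk : 0 < k)
    (hD₁ : 0 < D₁) (hD₂ : 0 < D₂) (hT : 0 < T) (hη : 0 < η)
    (hr : 0 < r) (hr₀ : r < min (η / σ) (η / ((D₁ + D₂ / η ^ 2) * T)))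
    (y ybar : ℕ → ℝ) (Δ : ℕ → ℝ) (hΔ : ∀ m, 0 ≤ Δ m)
    (hΔT : ∀ n, ∑ m ∈ Finset.range (n + 1), Δ m ≤ T)
    (hy : ∀ m, 2 * η ≤ y m) (h0 : ybar 0 = y 0)
    (herr : ∀ n, |y (n + 1) - ybar (n + 1)| ≤
      r * ∑ m ∈ Finset.range (n + 1), (D₁ + D₂ / (ybar m) ^ 2) * Δ m) :
    (∀ m, η ≤ ybar m) ∧ r * σ ≤ η ∧
    (∀ n, |y (n + 1) - ybar (n + 1)| ≤ r * (D₁ + D₂ / η ^ 2) * T) :=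
  stmt_13_general σ D₁ D₂ T η r hσ hD₁ hD₂ hT hη hr hr₀ y ybar Δ hΔ hΔT hy h0 herr
end
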